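/- Let p be a prime, n ≥ 2, and let x_1,…,x_n, y_1,…,y_n, a be elements of 𝔽_p such that the intervals [x_1,y_1],…,[x_n,y_n] are pairwise disjoint, |[x_i,y_i]| ≥ 3 for all i, ∑_{i=1}^n |[x_i,y_i]| ≤ p − 1, and a ∉ {0, 1, −1}. Define S := {a z + ∑_{j≠i} x_j : i ∈ {1,…,n}, z ∈ [x_i,y_i]}. If x, y ∈ 𝔽_p satisfy S ⊆ [x,y], then |[x,y]| > max_{1≤i≤n} |[x_i,y_i]| + n − 2. -/

import Mathlib

/-!
Write `m_i = |[x_i, y_i]|`, `M = max m_i` and `L = |[u, v]|`. The injective map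
`z ↦ (a - 1) z + ∑ x_j` sends `z ∈ [x_i, y_i]` to `(a z + ∑_{j ≠ i} x_j) - (z - x_i)`, an element
of `[u, v] - [0, M - 1]`, which has at most `L + M - 1` elements; hence `∑ m_i ≤ L + M - 1`.

Along a longest interval the points `a z + ∑_{j ≠ i} x_j` form an arithmetic progression of `M`
terms inside `[u, v]`. Their offsets from `u` perform a walk in `{0, …, L - 1}` with steps `+a` or
`+a - p`, where `a` is read in `{2, …, p - 2}`. If all steps go the same way the terms are at least
two apart, so `L ≥ 2M - 1`; otherwise both kinds of steps are possible, and counting them gives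
`p + M - 1 ≤ 2L`. Either way, `M + 3(n - 1) ≤ ∑ m_i ≤ p - 1` forces `L > M + n - 2`.
-/

open scoped Pointwise

/-- The interval `[x,y]` in `ZMod p`: `{x, x+1, …, x+i}` where `i ∈ {0,…,p-1}`
reduces to `y - x` mod `p`. -/
def itv {p : ℕ} (x y : ZMod p) : Finset (ZMod p) :=
  (Finset.range ((y - x).val + 1)).image (fun i : ℕ => x + (i : ZMod p))

section Interval

variable {p : ℕ}

theorem add_natCast_mem_itv {x y : ZMod p} {k : ℕ} (hk : k ≤ (y - x).val) :
    x + (k : ZMod p) ∈ itv x y :=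
  Finset.mem_image_of_mem _ (Finset.mem_range_succ_iff.2 hk)

variable [NeZero p]

theorem mem_itv {x y s : ZMod p} : s ∈ itv x y ↔ (s - x).val ≤ (y - x).val := by
  simp only [itv, Finset.mem_image, Finset.mem_range, Nat.lt_succ_iff]
  constructor
  · rintro ⟨i, hi, rfl⟩
    rwa [add_sub_cancel_left, ZMod.val_cast_of_lt (hi.trans_lt (ZMod.val_lt _))]
  · exact fun h => ⟨(s - x).val, h, by rw [ZMod.natCast_zmod_val, add_sub_cancel]⟩

theorem card_itv (x y : ZMod p) : (itv x y).card = (y - x).val + 1 := by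
  rw [itv, Finset.card_image_of_injOn, Finset.card_range]
  intro i hi j hj hij
  have hlt : ∀ k ∈ (Finset.range ((y - x).val + 1) : Set ℕ), k < p := fun k hk =>
    (Finset.mem_range.1 hk).trans_le (ZMod.val_lt _)
  simpa only [ZMod.val_cast_of_lt (hlt i hi), ZMod.val_cast_of_lt (hlt j hj)] using
    congrArg ZMod.val (add_left_cancel hij)

theorem card_itv_sub_itv_le (u v x y : ZMod p) :
    (itv u v - itv x y).card + 1 ≤ (itv u v).card + (itv x y).card := by
  have hsub : itv u v - itv x y ⊆ (Finset.Icc (-((y - x).val : ℤ)) (v - u).val).image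
      fun j : ℤ => u - x + j := by
    intro w hw
    obtain ⟨s, hs, t, ht, rfl⟩ := Finset.mem_sub.1 hw
    have hs' := mem_itv.1 hs
    have ht' := mem_itv.1 ht
    refine Finset.mem_image.2 ⟨(s - u).val - (t - x).val, Finset.mem_Icc.2 ⟨by omega, by omega⟩, ?_⟩
    push_cast [ZMod.natCast_zmod_val]
    ring
  have := (Finset.card_le_card hsub).trans Finset.card_image_le
  rw [Int.card_Icc] at this
  rw [card_itv, card_itv]
  omega

theorem ZMod.val_add_eq_or (b c : ZMod p) :
    (b + c).val = b.val + c.val ∨ (b + c).val + p = b.val + c.val := by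
  rcases lt_or_ge (b.val + c.val) p with h | h
  · exact .inl (ZMod.val_add_of_lt h)
  · exact .inr (ZMod.val_add_val_of_le h).symm

end Interval

section Walk

variable {π : ℕ → ℕ} {d p α l w : ℕ}

theorem eq_add_mul_of_forall_lt_succ :
    ∀ {w : ℕ}, (∀ k < w, π (k + 1) = π k + d) → π w = π 0 + w * d
  | 0, _ => by simp
  | w + 1, h => by
    rw [h w w.lt_succ_self, eq_add_mul_of_forall_lt_succ fun k hk => h k (hk.trans w.lt_succ_self)]
    ring

theorem add_mul_eq_of_forall_lt_succ :
    ∀ {w : ℕ}, (∀ k < w, π (k + 1) + d = π k) → π w + w * d = π 0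
  | 0, _ => by simp
  | w + 1, h => by
    rw [← add_mul_eq_of_forall_lt_succ fun k hk => h k (hk.trans w.lt_succ_self),
      ← h w w.lt_succ_self]
    ring

/-- An up-step `π k ↦ π k + α` starts at most at `l - α`, a down-step `π k ↦ π k + α - p`
at least at `p - α`; injectivity then bounds the number of steps of each kind. -/
theorem length_le_of_bounded_walk (hle : ∀ k ≤ w, π k ≤ l) (hinj : Set.InjOn π (Set.Iic w))
    (hstep : ∀ k < w, π (k + 1) = π k + α ∨ π (k + 1) + p = π k + α) :
    w ≤ (l - α + 1) + (l + 1 - (p - α)) := by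
  classical
  have hinj' : Set.InjOn π (Finset.range w : Set ℕ) := hinj.mono fun k hk =>
    Set.mem_Iic.2 (Finset.mem_range.1 hk).le
  have hup : ((Finset.range w).filter fun k => π (k + 1) = π k + α).card ≤ l - α + 1 := by
    refine (Finset.card_le_card_of_injOn π (t := Finset.Icc 0 (l - α)) (fun k hk => ?_)
      (hinj'.mono (Finset.filter_subset _ _))).trans (Nat.card_Icc _ _).le
    obtain ⟨hkw, hk⟩ : k < w ∧ π (k + 1) = π k + α := by simpa using hk
    have := hle (k + 1) hkw
    simp only [Finset.coe_Icc, Set.mem_Icc]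
    omega
  have hdown : ((Finset.range w).filter fun k => ¬π (k + 1) = π k + α).card ≤
      l + 1 - (p - α) := by
    refine (Finset.card_le_card_of_injOn π (t := Finset.Icc (p - α) l) (fun k hk => ?_)
      (hinj'.mono (Finset.filter_subset _ _))).trans (Nat.card_Icc _ _).le
    obtain ⟨hkw, hk⟩ : k < w ∧ ¬π (k + 1) = π k + α := by simpa using hk
    have := (hstep k hkw).resolve_left hk
    have := hle k hkw.le
    simp only [Finset.coe_Icc, Set.mem_Icc]
    omega
  have := Finset.card_filter_add_card_filter_not (s := Finset.range w)
    (fun k => π (k + 1) = π k + α)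
  rw [Finset.card_range] at this
  omega

theorem two_mul_le_or_add_le_of_bounded_walk (hα : 2 ≤ α) (hαp : α + 2 ≤ p)
    (hle : ∀ k ≤ w, π k ≤ l) (hinj : Set.InjOn π (Set.Iic w))
    (hstep : ∀ k < w, π (k + 1) = π k + α ∨ π (k + 1) + p = π k + α) :
    2 * w ≤ l ∨ p + w ≤ 2 * l + 2 := by
  have hdown_of : ∀ k < w, π (k + 1) ≠ π k + α → π (k + 1) + (p - α) = π k := fun k hk hne => by
    have := (hstep k hk).resolve_left hne
    omega
  by_cases hup : ∀ k < w, π (k + 1) = π k + α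
  · have := eq_add_mul_of_forall_lt_succ hup
    have := hle w le_rfl
    have := Nat.mul_le_mul_left w hα
    left; omega
  by_cases hdown : ∀ k < w, π (k + 1) + (p - α) = π k
  · have := add_mul_eq_of_forall_lt_succ hdown
    have := hle 0 (Nat.zero_le _)
    have := Nat.mul_le_mul_left w (show 2 ≤ p - α by omega)
    left; omega
  push Not at hup hdown
  obtain ⟨k₁, hk₁, hne₁⟩ := hup
  obtain ⟨k₂, hk₂, hne₂⟩ := hdown
  have hup₂ : π (k₂ + 1) = π k₂ + α := (hstep k₂ hk₂).resolve_right (by omega)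
  have hdown₁ := hdown_of k₁ hk₁ hne₁
  have := hle (k₂ + 1) hk₂
  have := hle k₁ hk₁.le
  have := length_le_of_bounded_walk hle hinj hstep
  right; omega

end Walk

section Prime

variable {p : ℕ} [Fact p.Prime]

theorem sum_card_itv_le_of_affine_mem {ι : Type*} [Fintype ι] {x y : ι → ZMod p}
    {a c u v k : ZMod p} (ha1 : a ≠ 1)
    (hdisj : Pairwise fun i j => Disjoint (itv (x i) (y i)) (itv (x j) (y j)))
    (hk : ∀ i, (y i - x i).val ≤ k.val)
    (hS : ∀ i, ∀ z ∈ itv (x i) (y i), a * z + (c - x i) ∈ itv u v) :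
    ∑ i, (itv (x i) (y i)).card ≤ (itv u v).card + k.val := by
  classical
  have hmaps : ((Finset.univ.biUnion fun i => itv (x i) (y i)).image
      fun z => (a - 1) * z + c) ⊆ itv u v - itv 0 k := by
    intro w hw
    simp only [Finset.mem_image, Finset.mem_biUnion, Finset.mem_univ, true_and] at hw
    obtain ⟨z, ⟨i, hz⟩, rfl⟩ := hw
    refine Finset.mem_sub.2 ⟨_, hS i z hz, z - x i, mem_itv.2 ?_, by ring⟩
    simpa using (mem_itv.1 hz).trans (hk i)
  have hinj : Function.Injective fun z : ZMod p => (a - 1) * z + c := fun _ _ h =>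
    mul_left_cancel₀ (sub_ne_zero.2 ha1) (add_right_cancel h)
  have hsumset := card_itv_sub_itv_le u v 0 k
  rw [card_itv 0 k, sub_zero] at hsumset
  rw [← Finset.card_biUnion fun i _ j _ hij => hdisj hij,
    ← Finset.card_image_of_injective _ hinj]
  have := Finset.card_le_card hmaps
  omega

theorem card_itv_large_of_arithProg_mem {a s u v : ZMod p} {w : ℕ} (hw : w < p) (ha0 : a ≠ 0)
    (ha1 : a ≠ 1) (han1 : a ≠ -1) (hS : ∀ k ≤ w, s + k * a ∈ itv u v) :
    2 * w < (itv u v).card ∨ p + w ≤ 2 * (itv u v).card := by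
  have hp := (Fact.out : p.Prime).two_le
  have hα0 : a.val ≠ 0 := (ZMod.val_ne_zero a).2 ha0
  have hα1 : a.val ≠ 1 := mt (ZMod.val_eq_one (by omega) a).1 ha1
  have hαn1 : a.val ≠ p - 1 := fun h => han1 <| by
    rw [← ZMod.natCast_zmod_val a, h, Nat.cast_sub (by omega), ZMod.natCast_self, Nat.cast_one,
      zero_sub]
  have hαp := ZMod.val_lt a
  rw [card_itv]
  refine (two_mul_le_or_add_le_of_bounded_walk (p := p) (α := a.val)
    (π := fun k => (s + k * a - u).val) (by omega) (by omega) (fun k hk => mem_itv.1 (hS k hk))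
    ?_ fun k _ => ?_).imp (by omega) (by omega)
  · intro k hk j hj hkj
    have : (k : ZMod p) * a = j * a := by simpa using ZMod.val_injective p hkj
    have := congrArg ZMod.val (mul_right_cancel₀ ha0 this)
    rwa [ZMod.val_cast_of_lt ((Set.mem_Iic.1 hk).trans_lt hw),
      ZMod.val_cast_of_lt ((Set.mem_Iic.1 hj).trans_lt hw)] at this
  · rw [show s + ((k + 1 : ℕ) : ZMod p) * a - u = s + k * a - u + a by push_cast; ring]
    exact ZMod.val_add_eq_or _ _

end Prime

theorem stmt_14 (p n : ℕ) (hp : p.Prime) (hn : 2 ≤ n)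
    (x y : Fin n → ZMod p) (a : ZMod p)
    (hdisj : ∀ i j, i ≠ j → Disjoint (itv (x i) (y i)) (itv (x j) (y j)))
    (hcard : ∀ i, 3 ≤ (itv (x i) (y i)).card)
    (hsum : ∑ i, (itv (x i) (y i)).card ≤ p - 1)
    (ha0 : a ≠ 0) (ha1 : a ≠ 1) (han1 : a ≠ -1)
    (u v : ZMod p)
    (hS : ∀ i : Fin n, ∀ z ∈ itv (x i) (y i),
      a * z + ∑ j ∈ Finset.univ.erase i, x j ∈ itv u v) :
    Finset.univ.sup (fun i => (itv (x i) (y i)).card) + n - 2 < (itv u v).card := by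
  have : Fact p.Prime := ⟨hp⟩
  have : Nonempty (Fin n) := ⟨⟨0, by omega⟩⟩
  obtain ⟨i₀, -, hi₀⟩ := Finset.exists_mem_eq_sup Finset.univ Finset.univ_nonempty
    fun i => (itv (x i) (y i)).card
  have hmax : ∀ i, (y i - x i).val ≤ (y i₀ - x i₀).val := fun i => by
    have := hi₀ ▸ Finset.le_sup (f := fun i => (itv (x i) (y i)).card) (Finset.mem_univ i)
    simpa only [card_itv, add_le_add_iff_right] using this
  have hS' : ∀ i, ∀ z ∈ itv (x i) (y i), a * z + (∑ j, x j - x i) ∈ itv u v := by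
    simpa only [Finset.sum_erase_eq_sub (Finset.mem_univ _)] using hS
  have hlower : (itv (x i₀) (y i₀)).card + 3 * (n - 1) ≤ ∑ i, (itv (x i) (y i)).card := by
    rw [← Finset.add_sum_erase _ _ (Finset.mem_univ i₀)]
    have := Finset.card_nsmul_le_sum (Finset.univ.erase i₀) _ 3 fun i _ => hcard i
    simpa [Finset.card_erase_of_mem, mul_comm] using this
  have hupper := sum_card_itv_le_of_affine_mem ha1 (fun i j hij => hdisj i j hij) hmax hS'
  have hprog := card_itv_large_of_arithProg_mem (s := a * x i₀ + (∑ j, x j - x i₀))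
    (ZMod.val_lt (y i₀ - x i₀)) ha0 ha1 han1 fun k hk => by
      simpa only [mul_add, add_right_comm, mul_comm] using hS' i₀ _ (add_natCast_mem_itv hk)
  rw [hi₀]
  simp only [card_itv] at hlower hupper hprog hsum ⊢
  omega
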